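/- arXiv:2102.09497 — 4 statements merged into one kernel-verified Lean document; each statement's English description precedes it below -/
import Mathlib

section
/- Let p ≥ 1 be an integer, d = p + 1, N > 0 and S > 0. Then for every y > 0 the improper integral ∫₀^y z⁻² e^{N/z} (e^{N/z} + S)^{−1/N − d} dz converges and (1 + pN) S^{1/N + p} ∫₀^y z⁻² e^{N/z} (e^{N/z} + S)^{−1/N − d} dz = ( (e^{N/y} + S) / S )^{−1/N − p}. -/
/-!
The integrand is the derivative of `F z = (e^{N/z} + S)^{-1/N-p} / (1 + pN)`, and `F z → 0` as
`z → 0⁺` because the base tends to `+∞` while the exponent is negative. Since the integrand is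
nonnegative, this limit yields both the integrability on `(0, y]` and the value `F y`; the right-hand
side is `F y` rescaled by `(1 + pN) S^{1/N+p}`.
-/

open MeasureTheory Set Filter Real Topology

theorem integrableOn_Ioc_deriv_of_nonneg_of_tendsto {f f' : ℝ → ℝ} {a b L : ℝ}
    (hderiv : ∀ x ∈ Ioc a b, HasDerivAt f (f' x) x) (hf' : ∀ x ∈ Ioo a b, 0 ≤ f' x)
    (hlim : Tendsto f (𝓝[>] a) (𝓝 L)) : IntegrableOn f' (Ioc a b) := by
  classical
  -- Redefining `f a := L` makes `f` continuous on `[a, b]` without changing it on `(a, b]`.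
  have hcont : ContinuousOn (Function.update f a L) (Icc a b) := by
    rw [continuousOn_update_iff, Icc_sdiff_left]
    exact ⟨fun x hx => (hderiv x hx).continuousAt.continuousWithinAt,
      fun _ => hlim.mono_left (nhdsWithin_mono _ Ioc_subset_Ioi_self)⟩
  refine intervalIntegral.integrableOn_deriv_of_nonneg hcont (fun x hx => ?_) hf'
  refine (hderiv x (Ioo_subset_Ioc_self hx)).congr_of_eventuallyEq ?_
  filter_upwards [Ioi_mem_nhds hx.1] with z hz using Function.update_of_ne hz.ne' _ _

theorem setIntegral_Ioc_deriv_of_nonneg_of_tendsto {f f' : ℝ → ℝ} {a b L : ℝ} (hab : a < b)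
    (hderiv : ∀ x ∈ Ioc a b, HasDerivAt f (f' x) x) (hf' : ∀ x ∈ Ioo a b, 0 ≤ f' x)
    (hlim : Tendsto f (𝓝[>] a) (𝓝 L)) : ∫ x in Ioc a b, f' x = f b - L := by
  have hint := integrableOn_Ioc_deriv_of_nonneg_of_tendsto hderiv hf' hlim
  rw [← intervalIntegral.integral_of_le hab.le]
  exact intervalIntegral.integral_eq_sub_of_hasDerivAt_of_tendsto hab
    (fun x hx => hderiv x (Ioo_subset_Ioc_self hx))
    ((intervalIntegrable_iff_integrableOn_Ioc_of_le hab.le).2 hint) hlim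
    (hderiv b (right_mem_Ioc.2 hab)).continuousAt.continuousWithinAt

noncomputable def softMaxPrimitive (p N S z : ℝ) : ℝ :=
  (exp (N / z) + S) ^ (-1 / N - p) / (1 + p * N)

theorem hasDerivAt_softMaxPrimitive {p N S z : ℝ} (hN : N ≠ 0) (hpN : 1 + p * N ≠ 0)
    (hS : 0 ≤ S) (hz : z ≠ 0) :
    HasDerivAt (softMaxPrimitive p N S)
      ((z ^ 2)⁻¹ * exp (N / z) * (exp (N / z) + S) ^ (-1 / N - (p + 1))) z := by
  have hinv : HasDerivAt (fun w : ℝ => N / w) (N * -(z ^ 2)⁻¹) z := by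
    simpa only [div_eq_mul_inv] using (hasDerivAt_inv hz).const_mul N
  have hbase : exp (N / z) + S ≠ 0 := by positivity
  have h := ((hinv.exp.add_const S).rpow_const (p := -1 / N - p) (Or.inl hbase)).div_const
    (1 + p * N)
  rw [show -1 / N - p - 1 = -1 / N - (p + 1) by ring] at h
  refine h.congr_deriv ?_
  rw [div_eq_iff hpN]
  field_simp
  ring

theorem tendsto_softMaxPrimitive_nhdsGT_zero {p N S : ℝ} (hN : 0 < N) (hpN : 0 < 1 + p * N) :
    Tendsto (softMaxPrimitive p N S) (𝓝[>] 0) (𝓝 0) := by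
  have hexp : Tendsto (fun z : ℝ => exp (N / z) + S) (𝓝[>] 0) atTop := by
    refine (tendsto_exp_atTop.comp ?_).atTop_add tendsto_const_nhds
    exact (tendsto_inv_nhdsGT_zero.const_mul_atTop hN).congr fun z => (div_eq_mul_inv N z).symm
  have hexponent : -1 / N - p = -((1 + p * N) / N) := by field_simp; ring
  have hpow := (tendsto_rpow_neg_atTop (div_pos hpN hN)).comp hexp
  rw [← hexponent] at hpow
  have h := hpow.div_const (1 + p * N)
  rwa [zero_div] at h

theorem stmt5_general (p : ℕ) (N S : ℝ) (hN : 0 < N) (hS : 0 < S)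
    (y : ℝ) (hy : 0 < y) :
    MeasureTheory.IntegrableOn
      (fun z : ℝ => (z ^ 2)⁻¹ * Real.exp (N / z) *
        (Real.exp (N / z) + S) ^ (-1 / N - ((p : ℝ) + 1)))
      (Set.Ioc 0 y) ∧
    (1 + (p : ℝ) * N) * S ^ (1 / N + (p : ℝ)) *
        (∫ z in Set.Ioc (0:ℝ) y, (z ^ 2)⁻¹ * Real.exp (N / z) *
          (Real.exp (N / z) + S) ^ (-1 / N - ((p : ℝ) + 1)))
      = ((Real.exp (N / y) + S) / S) ^ (-1 / N - (p : ℝ)) := by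
  have hpN : 0 < 1 + (p : ℝ) * N := by positivity
  have hderiv : ∀ z ∈ Ioc 0 y, HasDerivAt (softMaxPrimitive p N S)
      ((z ^ 2)⁻¹ * exp (N / z) * (exp (N / z) + S) ^ (-1 / N - ((p : ℝ) + 1))) z :=
    fun z hz => hasDerivAt_softMaxPrimitive hN.ne' hpN.ne' hS.le hz.1.ne'
  have hnonneg : ∀ z ∈ Ioo 0 y,
      0 ≤ (z ^ 2)⁻¹ * exp (N / z) * (exp (N / z) + S) ^ (-1 / N - ((p : ℝ) + 1)) :=
    fun z _ => by positivity
  have hlim := tendsto_softMaxPrimitive_nhdsGT_zero (p := p) (S := S) hN hpN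
  refine ⟨integrableOn_Ioc_deriv_of_nonneg_of_tendsto hderiv hnonneg hlim, ?_⟩
  rw [setIntegral_Ioc_deriv_of_nonneg_of_tendsto hy hderiv hnonneg hlim, sub_zero,
    softMaxPrimitive, div_rpow (by positivity) hS.le,
    show -1 / N - (p : ℝ) = -(1 / N + p) by ring, rpow_neg hS.le, div_inv_eq_mul]
  field_simp

/-- Closed form of the soft-maximum conditional distribution function:
for `d = p + 1`, `N > 0`, `S > 0` and `y > 0`, the improper integral
`∫₀^y z⁻² e^{N/z} (e^{N/z} + S)^{−1/N−d} dz` converges and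
`(1 + pN) S^{1/N+p}` times it equals `((e^{N/y} + S)/S)^{−1/N−p}`. -/
theorem stmt5 (p : ℕ) (hp : 1 ≤ p) (N S : ℝ) (hN : 0 < N) (hS : 0 < S)
    (y : ℝ) (hy : 0 < y) :
    MeasureTheory.IntegrableOn
      (fun z : ℝ => (z ^ 2)⁻¹ * Real.exp (N / z) *
        (Real.exp (N / z) + S) ^ (-1 / N - ((p : ℝ) + 1)))
      (Set.Ioc 0 y) ∧
    (1 + (p : ℝ) * N) * S ^ (1 / N + (p : ℝ)) *
        (∫ z in Set.Ioc (0:ℝ) y, (z ^ 2)⁻¹ * Real.exp (N / z) *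
          (Real.exp (N / z) + S) ^ (-1 / N - ((p : ℝ) + 1)))
      = ((Real.exp (N / y) + S) / S) ^ (-1 / N - (p : ℝ)) :=
  stmt5_general p N S hN hS y hy
end

section
/- Let α ∈ (0,1), x > 0, y > 0 and q ∈ (0,1). Then the equation exp{−(x^{−1/α} + y^{−1/α})^α + 1/x} (x^{−1/α} + y^{−1/α})^{α−1} x^{1 − 1/α} = q holds if and only if the quantity u = (α/(1−α)) (x^{−1/α} + y^{−1/α})^α satisfies u e^u = (α/(1−α)) x⁻¹ e^{(α/(1−α)) x⁻¹} q^{α/(α−1)}. -/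
/-!
Raising the equation to the power `α/(α-1) = -c`, with `c = α/(1-α)` and `B = (x^{-1/α}+y^{-1/α})^α`,
turns it into `q^{α/(α-1)} = e^{c(B - x⁻¹)} B x`; multiplying by `c x⁻¹ e^{c x⁻¹}` gives the
Lambert form `c B e^{cB} = c x⁻¹ e^{c x⁻¹} q^{α/(α-1)}`.
-/

open Real

lemma mul_exp_eq_mul_exp_mul_iff {c b t r : ℝ} (hc : c ≠ 0) (ht : t ≠ 0) :
    c * b * exp (c * b) = c * t * exp (c * t) * r ↔ exp (c * (b - t)) * (b / t) = r := by
  have hK : t * exp (c * t) ≠ 0 := mul_ne_zero ht (exp_pos _).ne'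
  rw [mul_assoc c b, mul_assoc c t, mul_assoc c, mul_right_inj' hc, mul_comm _ r,
    ← div_eq_iff hK, mul_sub, exp_sub, div_mul_div_comm, mul_comm b, mul_comm t]

lemma logistic_conditional_rpow {α s x : ℝ} (hα₀ : α ≠ 0) (hα₁ : α ≠ 1) (hs : 0 < s)
    (hx : 0 < x) :
    (exp (-s ^ α + 1 / x) * s ^ (α - 1) * x ^ (1 - 1 / α)) ^ (α / (α - 1)) =
      exp (α / (1 - α) * (s ^ α - x⁻¹)) * (s ^ α / x⁻¹) := by
  have hα₁' : α - 1 ≠ 0 := sub_ne_zero.2 hα₁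
  have hexp : (-s ^ α + 1 / x) * (α / (α - 1)) = α / (1 - α) * (s ^ α - x⁻¹) := by
    field_simp
    ring
  have hs_exp : (α - 1) * (α / (α - 1)) = α := by field_simp
  have hx_exp : (1 - 1 / α) * (α / (α - 1)) = 1 := by field_simp
  rw [mul_rpow (by positivity) (by positivity), mul_rpow (by positivity) (by positivity),
    ← exp_mul, ← rpow_mul hs.le, ← rpow_mul hx.le, hexp, hs_exp, hx_exp, rpow_one,
    div_inv_eq_mul, mul_assoc]

/-- The conditional quantile equation of the logistic model,
`G_{Y|X}(y|x) = q`, holds iff `u = (α/(1−α)) (x^{−1/α}+y^{−1/α})^α` satisfies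
the Lambert-type equation `u e^u = (α/(1−α)) x⁻¹ e^{(α/(1−α)) x⁻¹} q^{α/(α−1)}`. -/
theorem stmt9 (α x y q : ℝ) (hα : α ∈ Set.Ioo (0:ℝ) 1) (hx : 0 < x) (hy : 0 < y)
    (hq : q ∈ Set.Ioo (0:ℝ) 1) :
    (Real.exp (-(x ^ (-1/α) + y ^ (-1/α)) ^ α + 1 / x) *
        (x ^ (-1/α) + y ^ (-1/α)) ^ (α - 1) * x ^ (1 - 1/α) = q)
    ↔ (α / (1 - α)) * (x ^ (-1/α) + y ^ (-1/α)) ^ α *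
          Real.exp ((α / (1 - α)) * (x ^ (-1/α) + y ^ (-1/α)) ^ α)
        = (α / (1 - α)) * x⁻¹ * Real.exp ((α / (1 - α)) * x⁻¹) * q ^ (α / (α - 1)) := by
  obtain ⟨hα₀, hα₁⟩ := hα
  have hs : 0 < x ^ (-1/α) + y ^ (-1/α) := by positivity
  have hp : α / (α - 1) ≠ 0 := div_ne_zero hα₀.ne' (by linarith)
  rw [← rpow_left_inj (by positivity) hq.1.le hp,
    logistic_conditional_rpow hα₀.ne' hα₁.ne hs hx,
    mul_exp_eq_mul_exp_mul_iff (div_ne_zero hα₀.ne' (by linarith)) (inv_ne_zero hx.ne')]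
end

section
/- Let α ∈ (0,1), q ∈ (0,1), and suppose y : (0,∞) → (0,∞) satisfies, for every x > 0, the conditional quantile equation exp{−(x^{−1/α} + y(x)^{−1/α})^α + 1/x} (x^{−1/α} + y(x)^{−1/α})^{α−1} x^{1 − 1/α} = q. Then lim_{x→∞} y(x)/x = (q^{−1/(1−α)} − 1)^{−α}. -/
/-!
Substituting `s = 1 + (y/x)^(-1/α)` turns the quantile equation into
`exp ((1 - s^α)/x) * s^(α-1) = q`. As `s ≥ 1`, the exponential factor is at most `1`, so
`q ≤ s^(α-1)`, i.e. `s ≤ S := q^(1/(α-1))`. Hence the exponent `(s^α - 1)/x` is squeezed to `0`,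
`s = (q * exp ((s^α - 1)/x))^(1/(α-1)) → S`, and `y/x = (s - 1)^(-α) → (S - 1)^(-α)`.
-/

open Real Filter Topology

lemma logistic_quantile_lhs_eq {α x y : ℝ} (hα : α ≠ 0) (hx : 0 < x) (hy : 0 < y) :
    exp (-(x ^ (-1/α) + y ^ (-1/α)) ^ α + 1 / x) * (x ^ (-1/α) + y ^ (-1/α)) ^ (α - 1) *
        x ^ (1 - 1/α) =
      exp ((1 - (1 + (y / x) ^ (-1/α)) ^ α) / x) * (1 + (y / x) ^ (-1/α)) ^ (α - 1) := by
  have hsum : x ^ (-1/α) + y ^ (-1/α) = x ^ (-1/α) * (1 + (y / x) ^ (-1/α)) := by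
    rw [div_rpow hy.le hx.le, mul_add, mul_div_cancel₀ _ (by positivity), mul_one]
  set s := 1 + (y / x) ^ (-1/α)
  have hs : 0 < s := by positivity
  have hxα : 0 < x ^ (-1/α) := by positivity
  have hpowα : (x ^ (-1/α) * s) ^ α = s ^ α / x := by
    rw [mul_rpow hxα.le hs.le, ← rpow_mul hx.le, div_mul_cancel₀ _ hα, rpow_neg_one, inv_mul_eq_div]
  have hpowα1 : (x ^ (-1/α) * s) ^ (α - 1) * x ^ (1 - 1/α) = s ^ (α - 1) := by
    rw [mul_rpow hxα.le hs.le, ← rpow_mul hx.le, mul_comm (x ^ _), mul_assoc, ← rpow_add hx,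
      show -1/α * (α - 1) + (1 - 1/α) = 0 by field_simp; ring, rpow_zero, mul_one]
  rw [hsum, mul_assoc, hpowα1, hpowα]
  congr 2
  ring

variable {α q x s : ℝ}

lemma le_rpow_of_exp_mul_rpow_eq (hα : α ∈ Set.Ioo (0:ℝ) 1) (hq : 0 < q) (hx : 0 < x)
    (hs : 1 ≤ s) (h : exp ((1 - s ^ α) / x) * s ^ (α - 1) = q) :
    s ≤ q ^ (1 / (α - 1)) := by
  have hα1 : α - 1 < 0 := by linarith [hα.2]
  have hexp : exp ((1 - s ^ α) / x) ≤ 1 := by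
    rw [exp_le_one_iff]
    exact div_nonpos_of_nonpos_of_nonneg (by linarith [one_le_rpow hs hα.1.le]) hx.le
  have hqs : q ≤ s ^ (α - 1) := h ▸ mul_le_of_le_one_left (by positivity) hexp
  calc s = (s ^ (α - 1)) ^ (1 / (α - 1)) := by
        rw [← rpow_mul (by linarith), mul_one_div_cancel hα1.ne, rpow_one]
    _ ≤ q ^ (1 / (α - 1)) := rpow_le_rpow_of_nonpos hq hqs (one_div_neg.mpr hα1).le

lemma eq_rpow_of_exp_mul_rpow_eq (hα : α ≠ 1) (hs : 0 < s)
    (h : exp ((1 - s ^ α) / x) * s ^ (α - 1) = q) :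
    s = (q * exp ((s ^ α - 1) / x)) ^ (1 / (α - 1)) := by
  have hα1 : α - 1 ≠ 0 := sub_ne_zero.mpr hα
  rw [← h, mul_comm, ← mul_assoc, ← exp_add, show (s ^ α - 1) / x + (1 - s ^ α) / x = 0 by ring,
    exp_zero, one_mul, ← rpow_mul hs.le, mul_one_div_cancel hα1, rpow_one]

lemma tendsto_of_exp_mul_rpow_eq (hα : α ∈ Set.Ioo (0:ℝ) 1) (hq : 0 < q) {s : ℝ → ℝ}
    (hs : ∀ᶠ x in atTop, 1 ≤ s x ∧ exp ((1 - s x ^ α) / x) * s x ^ (α - 1) = q) :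
    Tendsto s atTop (𝓝 (q ^ (1 / (α - 1)))) := by
  set S := q ^ (1 / (α - 1))
  have hexponent : Tendsto (fun x => (s x ^ α - 1) / x) atTop (𝓝 0) := by
    refine tendsto_of_tendsto_of_tendsto_of_le_of_le' tendsto_const_nhds
      (tendsto_const_nhds.div_atTop tendsto_id : Tendsto (fun x => (S ^ α - 1) / x) _ _) ?_ ?_
    all_goals
      filter_upwards [hs, eventually_gt_atTop 0] with x ⟨hs1, heq⟩ hx
    · exact div_nonneg (by linarith [one_le_rpow hs1 hα.1.le]) hx.le
    · gcongr
      · exact hα.1.le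
      · exact le_rpow_of_exp_mul_rpow_eq hα hq hx hs1 heq
  have hlim : Tendsto (fun x => (q * exp ((s x ^ α - 1) / x)) ^ (1 / (α - 1))) atTop (𝓝 S) := by
    have := (((continuous_exp.tendsto 0).comp hexponent).const_mul q).rpow_const
      (p := 1 / (α - 1)) (Or.inl (by simpa using hq.ne'))
    rwa [exp_zero, mul_one] at this
  refine hlim.congr' ?_
  filter_upwards [hs] with x ⟨hs1, heq⟩
  exact (eq_rpow_of_exp_mul_rpow_eq hα.2.ne (by linarith) heq).symm

/-- Asymptotic slope of the logistic regression lines: if `y(x)` solves the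
conditional quantile equation `G_{Y|X}(y(x)|x) = q` of the logistic model for
every `x > 0`, then `y(x)/x → (q^{−1/(1−α)} − 1)^{−α}` as `x → ∞`. -/
theorem stmt11 (α q : ℝ) (hα : α ∈ Set.Ioo (0:ℝ) 1) (hq : q ∈ Set.Ioo (0:ℝ) 1)
    (y : ℝ → ℝ) (hypos : ∀ x : ℝ, 0 < x → 0 < y x)
    (heq : ∀ x : ℝ, 0 < x →
      Real.exp (-(x ^ (-1/α) + (y x) ^ (-1/α)) ^ α + 1 / x) *
        (x ^ (-1/α) + (y x) ^ (-1/α)) ^ (α - 1) * x ^ (1 - 1/α) = q) :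
    Filter.Tendsto (fun x => y x / x) Filter.atTop
      (nhds ((q ^ (-1 / (1 - α)) - 1) ^ (-α))) := by
  obtain ⟨hq0, hq1⟩ := hq
  have hs : Tendsto (fun x => 1 + (y x / x) ^ (-1/α)) atTop (𝓝 (q ^ (1 / (α - 1)))) := by
    refine tendsto_of_exp_mul_rpow_eq hα hq0 ?_
    filter_upwards [eventually_gt_atTop 0] with x hx
    exact ⟨le_add_of_nonneg_right (rpow_pos_of_pos (div_pos (hypos x hx) hx) _).le,
      (logistic_quantile_lhs_eq hα.1.ne' hx (hypos x hx)).symm.trans (heq x hx)⟩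
  have hS : 1 < q ^ (1 / (α - 1)) :=
    one_lt_rpow_of_pos_of_lt_one_of_neg hq0 hq1 (one_div_neg.mpr (by linarith [hα.2]))
  rw [show -1 / (1 - α) = 1 / (α - 1) by rw [← neg_div_neg_eq, neg_neg, neg_sub]]
  refine ((hs.sub_const 1).rpow_const (Or.inl (sub_ne_zero.mpr hS.ne'))).congr' ?_
  filter_upwards [eventually_gt_atTop 0] with x hx
  rw [add_sub_cancel_left, ← rpow_mul (div_pos (hypos x hx) hx).le,
    show -1 / α * -α = 1 by field_simp [hα.1.ne'], rpow_one]
end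

section
/- Let J ≥ 2 be an integer, and for each pair of positive integers (α₁, α₂) with α₁ + α₂ = J let π_{(α₁,α₂)} ≥ 0 be given. Let dir(w; a, b) = Γ(a+b)/(Γ(a)Γ(b)) w^{a−1}(1−w)^{b−1} for w ∈ (0,1) and Be(c; a, b) = ∫₀^c dir(t; a, b) dt, and set h(w) = Σ_{α₁+α₂=J} π_{(α₁,α₂)} dir(w; α₁, α₂). Then for all x, y > 0, writing ω = x/(x+y): (i) 2 ∫₀¹ max(w/x, (1−w)/y) h(w) dw = (2/J) Σ_{α₁+α₂=J} π_{(α₁,α₂)} [ α₁ x⁻¹ {1 − Be(ω; α₁+1, α₂)} + α₂ y⁻¹ Be(ω; α₁, α₂+1) ]; and (ii) 2 ∫_ω^1 w h(w) dw = (2/J) Σ_{α₁+α₂=J} π_{(α₁,α₂)} α₁ {1 − Be(ω; α₁+1, α₂)}. -/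
/-!
Multiplying a Beta density by `w` or by `1 - w` only shifts one of its parameters:
`w · dir(w; a, b) = a/(a+b) · dir(w; a+1, b)` and `(1-w) · dir(w; a, b) = b/(a+b) · dir(w; a, b+1)`,
by `Γ(s+1) = s Γ(s)`. The maximum `max(w/x, (1-w)/y)` equals `(1-w)/y` on `[0, ω]` and `w/x`
on `[ω, 1]`, so splitting the integral at `ω` turns both pieces, term by term in the mixture `h`,
into Beta distribution functions at `ω`; the upper tail becomes `1 - Be` because each Beta density
has total mass one.
-/

open MeasureTheory Set ProbabilityTheory

/-- Unlike `ProbabilityTheory.betaPDFReal`, this is not truncated to `(0, 1)`. -/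
noncomputable def betaDensity (a b w : ℝ) : ℝ :=
  Real.Gamma (a + b) / (Real.Gamma a * Real.Gamma b) * w ^ (a - 1) * (1 - w) ^ (b - 1)

section BetaDensity

variable {a b c w : ℝ}

lemma betaPDFReal_eq_betaDensity (hw : w ∈ Ioo 0 1) : betaPDFReal a b w = betaDensity a b w := by
  rw [betaPDFReal, if_pos (show 0 < w ∧ w < 1 from hw), beta, one_div_div, betaDensity]

lemma integral_betaPDFReal (ha : 0 < a) (hb : 0 < b) : ∫ w, betaPDFReal a b w = 1 := by
  have hnonneg : ∀ w, 0 ≤ betaPDFReal a b w := fun w => by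
    rw [betaPDFReal]
    split_ifs with hw
    · exact (betaPDFReal_pos hw.1 hw.2 ha hb).le.trans_eq (if_pos hw)
    · exact le_rfl
  rw [integral_eq_lintegral_of_nonneg_ae (Filter.Eventually.of_forall hnonneg)
    (measurable_betaPDFReal a b).aestronglyMeasurable]
  exact (ENNReal.toReal_eq_one_iff _).mpr (lintegral_betaPDF_eq_one ha hb)

lemma integrableOn_betaDensity (ha : 0 < a) (hb : 0 < b) :
    IntegrableOn (betaDensity a b) (Ioo 0 1) :=
  (Integrable.of_integral_ne_zero (by simp [integral_betaPDFReal ha hb])).integrableOn.congr_fun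
    (fun _ hw => betaPDFReal_eq_betaDensity hw) measurableSet_Ioo

lemma integral_betaDensity (ha : 0 < a) (hb : 0 < b) : ∫ w in 0..1, betaDensity a b w = 1 := by
  rw [intervalIntegral.integral_of_le zero_le_one, integral_Ioc_eq_integral_Ioo,
    ← setIntegral_congr_fun measurableSet_Ioo fun _ hw => betaPDFReal_eq_betaDensity hw,
    setIntegral_eq_integral_of_forall_compl_eq_zero (f := betaPDFReal a b) (s := Ioo 0 1)
      fun w hw => if_neg (show ¬(0 < w ∧ w < 1) from hw),
    integral_betaPDFReal ha hb]

lemma intervalIntegrable_betaDensity (ha : 0 < a) (hb : 0 < b) {c d : ℝ} (hc : c ∈ Icc 0 1)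
    (hd : d ∈ Icc 0 1) : IntervalIntegrable (betaDensity a b) volume c d := by
  have h01 : IntervalIntegrable (betaDensity a b) volume 0 1 :=
    (intervalIntegrable_iff_integrableOn_Ioo_of_le zero_le_one).mpr (integrableOn_betaDensity ha hb)
  refine h01.mono_set ?_
  rw [uIcc_of_le zero_le_one]
  exact uIcc_subset_Icc hc hd

lemma mul_betaDensity (ha : 0 < a) (hb : 0 < b) (hw : 0 ≤ w) :
    w * betaDensity a b w = a / (a + b) * betaDensity (a + 1) b w := by
  have hab : a + b ≠ 0 := by positivity
  rw [betaDensity, betaDensity, add_right_comm, Real.Gamma_add_one hab, Real.Gamma_add_one ha.ne',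
    add_sub_cancel_right, ← sub_add_cancel a 1, Real.rpow_add_one' hw (by simpa using ha.ne'),
    sub_add_cancel]
  have := (Real.Gamma_pos_of_pos ha).ne'
  have := (Real.Gamma_pos_of_pos hb).ne'
  field_simp

lemma one_sub_mul_betaDensity (ha : 0 < a) (hb : 0 < b) (hw : w ≤ 1) :
    (1 - w) * betaDensity a b w = b / (a + b) * betaDensity a (b + 1) w := by
  have hab : a + b ≠ 0 := by positivity
  rw [betaDensity, betaDensity, ← add_assoc, Real.Gamma_add_one hab, Real.Gamma_add_one hb.ne',
    add_sub_cancel_right, ← sub_add_cancel b 1,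
    Real.rpow_add_one' (sub_nonneg.mpr hw) (by simpa using hb.ne'), sub_add_cancel]
  have := (Real.Gamma_pos_of_pos ha).ne'
  have := (Real.Gamma_pos_of_pos hb).ne'
  field_simp

lemma integral_betaDensity_eq_one_sub (ha : 0 < a) (hb : 0 < b) (hc : c ∈ Icc 0 1) :
    ∫ w in c..1, betaDensity a b w = 1 - ∫ w in 0..c, betaDensity a b w := by
  have h := intervalIntegral.integral_add_adjacent_intervals
    (intervalIntegrable_betaDensity ha hb (left_mem_Icc.mpr zero_le_one) hc)
    (intervalIntegrable_betaDensity ha hb hc (right_mem_Icc.mpr zero_le_one))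
  rw [integral_betaDensity ha hb] at h
  linarith

lemma integral_mul_betaDensity (ha : 0 < a) (hb : 0 < b) (hc : c ∈ Icc 0 1) :
    ∫ w in c..1, w * betaDensity a b w
      = a / (a + b) * (1 - ∫ w in 0..c, betaDensity (a + 1) b w) := by
  rw [← integral_betaDensity_eq_one_sub (by positivity) hb hc,
    ← intervalIntegral.integral_const_mul]
  refine intervalIntegral.integral_congr fun w hw => mul_betaDensity ha hb ?_
  rw [uIcc_of_le hc.2] at hw
  exact hc.1.trans hw.1

lemma integral_one_sub_mul_betaDensity (ha : 0 < a) (hb : 0 < b) (hc : c ≤ 1) :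
    ∫ w in 0..c, (1 - w) * betaDensity a b w
      = b / (a + b) * ∫ w in 0..c, betaDensity a (b + 1) w := by
  rw [← intervalIntegral.integral_const_mul]
  refine intervalIntegral.integral_congr fun w hw => one_sub_mul_betaDensity ha hb ?_
  exact (le_max_iff.mp hw.2).elim (fun h => h.trans zero_le_one) (fun h => h.trans hc)

end BetaDensity

section Mixture

variable {ι : Type*} (s : Finset ι) (p a b : ι → ℝ) {c : ℝ}

lemma intervalIntegrable_sum_betaDensity (ha : ∀ i ∈ s, 0 < a i) (hb : ∀ i ∈ s, 0 < b i) :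
    IntervalIntegrable (fun w => ∑ i ∈ s, p i * betaDensity (a i) (b i) w) volume 0 1 := by
  have := IntervalIntegrable.sum s fun i hi =>
    (intervalIntegrable_betaDensity (ha i hi) (hb i hi) (left_mem_Icc.mpr zero_le_one)
      (right_mem_Icc.mpr zero_le_one)).const_mul (p i)
  simpa only [Finset.sum_fn] using this

lemma integral_mul_sum_betaDensity (ha : ∀ i ∈ s, 0 < a i) (hb : ∀ i ∈ s, 0 < b i)
    (hc : c ∈ Icc 0 1) :
    ∫ w in c..1, w * ∑ i ∈ s, p i * betaDensity (a i) (b i) w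
      = ∑ i ∈ s, p i * (a i / (a i + b i) * (1 - ∫ w in 0..c, betaDensity (a i + 1) (b i) w)) := by
  simp_rw [Finset.mul_sum, mul_left_comm _ (p _)]
  rw [intervalIntegral.integral_finsetSum fun i hi =>
    ((intervalIntegrable_betaDensity (ha i hi) (hb i hi) hc
      (right_mem_Icc.mpr zero_le_one)).continuousOn_mul (continuousOn_id' _)).const_mul (p i)]
  refine Finset.sum_congr rfl fun i hi => ?_
  rw [intervalIntegral.integral_const_mul, integral_mul_betaDensity (ha i hi) (hb i hi) hc]

lemma integral_one_sub_mul_sum_betaDensity (ha : ∀ i ∈ s, 0 < a i) (hb : ∀ i ∈ s, 0 < b i)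
    (hc : c ∈ Icc 0 1) :
    ∫ w in 0..c, (1 - w) * ∑ i ∈ s, p i * betaDensity (a i) (b i) w
      = ∑ i ∈ s, p i * (b i / (a i + b i) * ∫ w in 0..c, betaDensity (a i) (b i + 1) w) := by
  simp_rw [Finset.mul_sum, mul_left_comm _ (p _)]
  rw [intervalIntegral.integral_finsetSum fun i hi =>
    ((intervalIntegrable_betaDensity (ha i hi) (hb i hi) (left_mem_Icc.mpr zero_le_one)
      hc).continuousOn_mul (g := fun w => 1 - w) (by fun_prop)).const_mul (p i)]
  refine Finset.sum_congr rfl fun i hi => ?_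
  rw [intervalIntegral.integral_const_mul,
    integral_one_sub_mul_betaDensity (ha i hi) (hb i hi) hc.2]

end Mixture

lemma integral_max_div_mul_eq {f : ℝ → ℝ} (hf : IntervalIntegrable f volume 0 1) {x y : ℝ}
    (hx : 0 < x) (hy : 0 < y) :
    ∫ w in 0..1, max (w / x) ((1 - w) / y) * f w
      = y⁻¹ * (∫ w in 0..x / (x + y), (1 - w) * f w) + x⁻¹ * ∫ w in x / (x + y)..1, w * f w := by
  set ω := x / (x + y) with hω_def
  have hxy : 0 < x + y := by positivity
  have hω : ω ∈ Icc 0 1 := ⟨by positivity, (div_le_one hxy).mpr (by linarith)⟩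
  have hg : IntervalIntegrable (fun w => max (w / x) ((1 - w) / y) * f w) volume 0 1 :=
    hf.continuousOn_mul (by fun_prop)
  have hsub : ∀ {d e : ℝ}, d ∈ Icc (0 : ℝ) 1 → e ∈ Icc (0 : ℝ) 1 → uIcc d e ⊆ uIcc 0 1 :=
    fun hd he => by rw [uIcc_of_le zero_le_one]; exact uIcc_subset_Icc hd he
  have hleft_max : ∀ w ≤ ω, w / x ≤ (1 - w) / y := fun w hw => by
    rw [hω_def, le_div_iff₀ hxy] at hw
    rw [div_le_div_iff₀ hx hy]
    linarith
  have hright_max : ∀ w, ω ≤ w → (1 - w) / y ≤ w / x := fun w hw => by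
    rw [hω_def, div_le_iff₀ hxy] at hw
    rw [div_le_div_iff₀ hy hx]
    linarith
  have hleft : ∫ w in 0..ω, max (w / x) ((1 - w) / y) * f w
      = y⁻¹ * ∫ w in 0..ω, (1 - w) * f w := by
    rw [← intervalIntegral.integral_const_mul]
    refine intervalIntegral.integral_congr fun w hw => ?_
    rw [uIcc_of_le hω.1] at hw
    rw [max_eq_right (hleft_max w hw.2), div_eq_inv_mul, mul_assoc]
  have hright : ∫ w in ω..1, max (w / x) ((1 - w) / y) * f w
      = x⁻¹ * ∫ w in ω..1, w * f w := by
    rw [← intervalIntegral.integral_const_mul]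
    refine intervalIntegral.integral_congr fun w hw => ?_
    rw [uIcc_of_le hω.2] at hw
    rw [max_eq_left (hright_max w hw.1), div_eq_inv_mul, mul_assoc]
  rw [← intervalIntegral.integral_add_adjacent_intervals
    (hg.mono_set (hsub (left_mem_Icc.mpr zero_le_one) hω))
    (hg.mono_set (hsub hω (right_mem_Icc.mpr zero_le_one))), hleft, hright]

theorem stmt15_general (J : ℕ) (pw : ℕ → ℝ)
    (dir : ℝ → ℝ → ℝ → ℝ)
    (hdir : ∀ w a b : ℝ, dir w a b
      = Real.Gamma (a + b) / (Real.Gamma a * Real.Gamma b) * w ^ (a - 1) * (1 - w) ^ (b - 1))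
    (Be : ℝ → ℝ → ℝ → ℝ)
    (hBe : ∀ c a b : ℝ, Be c a b = ∫ t in (0:ℝ)..c, dir t a b)
    (h : ℝ → ℝ)
    (hh : ∀ w : ℝ, h w = ∑ i ∈ Finset.Icc 1 (J - 1), pw i * dir w (i : ℝ) ((J - i : ℕ) : ℝ)) :
    ∀ x y : ℝ, 0 < x → 0 < y →
      (2 * (∫ w in (0:ℝ)..1, max (w / x) ((1 - w) / y) * h w)
        = 2 / (J : ℝ) * ∑ i ∈ Finset.Icc 1 (J - 1), pw i *
            ((i : ℝ) * x⁻¹ * (1 - Be (x / (x + y)) ((i : ℝ) + 1) ((J - i : ℕ) : ℝ))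
              + ((J - i : ℕ) : ℝ) * y⁻¹ * Be (x / (x + y)) (i : ℝ) (((J - i : ℕ) : ℝ) + 1))) ∧
      (2 * (∫ w in (x / (x + y))..1, w * h w)
        = 2 / (J : ℝ) * ∑ i ∈ Finset.Icc 1 (J - 1), pw i * (i : ℝ) *
            (1 - Be (x / (x + y)) ((i : ℝ) + 1) ((J - i : ℕ) : ℝ))) := by
  intro x y hx hy
  obtain rfl : dir = fun w a b => betaDensity a b w := funext fun w => funext₂ (hdir w)
  obtain rfl : Be = fun c a b => ∫ t in (0:ℝ)..c, betaDensity a b t := funext₃ hBe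
  obtain rfl : h = _ := funext hh
  have hω : x / (x + y) ∈ Icc (0 : ℝ) 1 :=
    ⟨by positivity, (div_le_one (by positivity)).mpr (by linarith)⟩
  have hi_pos : ∀ i ∈ Finset.Icc 1 (J - 1), (0 : ℝ) < i := fun i hi => by
    have := (Finset.mem_Icc.mp hi).1
    positivity
  have hJi_pos : ∀ i ∈ Finset.Icc 1 (J - 1), (0 : ℝ) < (J - i : ℕ) := fun i hi => by
    have := Finset.mem_Icc.mp hi
    exact Nat.cast_pos.mpr (by omega)
  have hsum : ∀ i ∈ Finset.Icc 1 (J - 1), (i : ℝ) + (J - i : ℕ) = J := fun i hi => by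
    have := (Finset.mem_Icc.mp hi).2
    rw [← Nat.cast_add, Nat.add_sub_cancel' (by omega)]
  rw [integral_max_div_mul_eq (intervalIntegrable_sum_betaDensity _ _ _ _ hi_pos hJi_pos) hx hy,
    integral_one_sub_mul_sum_betaDensity _ _ _ _ hi_pos hJi_pos hω,
    integral_mul_sum_betaDensity _ _ _ _ hi_pos hJi_pos hω]
  simp only [mul_add, Finset.mul_sum, ← Finset.sum_add_distrib]
  refine ⟨Finset.sum_congr rfl fun i hi => ?_, Finset.sum_congr rfl fun i hi => ?_⟩
  all_goals rw [hsum i hi]; ring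

/-- Closed-form identities for the Bernstein polynomial angular density:
with `h(w) = Σ_{α₁+α₂=J} π_{(α₁,α₂)} dir(w; α₁, α₂)` (the pair `(α₁,α₂)` of
positive integers summing to `J` being indexed by `α₁ = i ∈ {1,…,J−1}`,
`α₂ = J − i`), the exponent-measure integral and the tail integral
`2∫_ω^1 w h(w) dw` are explicit mixtures of Beta distribution functions. -/
theorem stmt15 (J : ℕ) (hJ : 2 ≤ J) (pw : ℕ → ℝ)
    (hpw : ∀ i ∈ Finset.Icc 1 (J - 1), 0 ≤ pw i)
    (dir : ℝ → ℝ → ℝ → ℝ)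
    (hdir : ∀ w a b : ℝ, dir w a b
      = Real.Gamma (a + b) / (Real.Gamma a * Real.Gamma b) * w ^ (a - 1) * (1 - w) ^ (b - 1))
    (Be : ℝ → ℝ → ℝ → ℝ)
    (hBe : ∀ c a b : ℝ, Be c a b = ∫ t in (0:ℝ)..c, dir t a b)
    (h : ℝ → ℝ)
    (hh : ∀ w : ℝ, h w = ∑ i ∈ Finset.Icc 1 (J - 1), pw i * dir w (i : ℝ) ((J - i : ℕ) : ℝ)) :
    ∀ x y : ℝ, 0 < x → 0 < y →
      (2 * (∫ w in (0:ℝ)..1, max (w / x) ((1 - w) / y) * h w)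
        = 2 / (J : ℝ) * ∑ i ∈ Finset.Icc 1 (J - 1), pw i *
            ((i : ℝ) * x⁻¹ * (1 - Be (x / (x + y)) ((i : ℝ) + 1) ((J - i : ℕ) : ℝ))
              + ((J - i : ℕ) : ℝ) * y⁻¹ * Be (x / (x + y)) (i : ℝ) (((J - i : ℕ) : ℝ) + 1))) ∧
      (2 * (∫ w in (x / (x + y))..1, w * h w)
        = 2 / (J : ℝ) * ∑ i ∈ Finset.Icc 1 (J - 1), pw i * (i : ℝ) *
            (1 - Be (x / (x + y)) ((i : ℝ) + 1) ((J - i : ℕ) : ℝ))) :=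
  stmt15_general J pw dir hdir Be hBe h hh
end
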